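/- For X with standard logistic density and any t ∈ ℝ with t ≠ 0, E[e^{itX}] = πt/sinh(πt); for t = 0 the characteristic function equals 1. -/

import Mathlib

/-!
The substitution `u = sigmoid x` maps `ℝ` onto `(0, 1)` with `du = sigmoid x (1 - sigmoid x) dx`,
which is exactly the logistic density, and turns `exp (s x)` into `u ^ s (1 - u) ^ (-s)`. Hence
`E[exp (s X)] = B(1 + s, 1 - s) = Γ(1 + s) Γ(1 - s) = π s / sin (π s)` by the reflection formula,
and `s = i t` gives `π t / sinh (π t)`.
-/

open MeasureTheory Complex Set Real

namespace Real

lemma exp_neg_div_one_add_exp_neg_sq (x : ℝ) :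
    exp (-x) / (1 + exp (-x)) ^ 2 = sigmoid x * (1 - sigmoid x) := by
  rw [← sigmoid_neg, ← sigmoid_mul_rexp_neg, sigmoid_def]
  field

lemma log_sigmoid_neg (x : ℝ) : log (sigmoid (-x)) = log (sigmoid x) - x := by
  rw [← sigmoid_mul_rexp_neg, log_mul (sigmoid_pos x).ne' (exp_pos _).ne', log_exp]
  ring

end Real

lemma Complex.sigmoid_cpow_mul_one_sub_sigmoid_cpow_neg (x : ℝ) (s : ℂ) :
    (sigmoid x : ℂ) ^ s * (1 - (sigmoid x : ℂ)) ^ (-s) = exp (s * x) := by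
  have hne (y : ℝ) : (sigmoid y : ℂ) ≠ 0 := ofReal_ne_zero.2 (sigmoid_pos y).ne'
  rw [← ofReal_one, ← ofReal_sub, ← sigmoid_neg, cpow_def_of_ne_zero (hne x),
    cpow_def_of_ne_zero (hne (-x)), ← Complex.exp_add, ← ofReal_log (sigmoid_pos x).le,
    ← ofReal_log (sigmoid_pos _).le, log_sigmoid_neg]
  push_cast
  ring_nf

theorem integral_Ioo_zero_one_eq_integral_comp_sigmoid {E : Type*} [NormedAddCommGroup E]
    [NormedSpace ℝ E] (g : ℝ → E) :
    ∫ u in Ioo 0 1, g u = ∫ x, (sigmoid x * (1 - sigmoid x)) • g (sigmoid x) := by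
  have h := integral_image_eq_integral_abs_deriv_smul MeasurableSet.univ
    (fun x _ => (hasDerivAt_sigmoid x).hasDerivWithinAt) sigmoid_injective.injOn g
  rw [image_univ, range_sigmoid, setIntegral_univ] at h
  rw [h]
  congr with x
  rw [abs_of_pos (mul_pos (sigmoid_pos x) (sub_pos.2 (sigmoid_lt_one x)))]

theorem integral_cexp_mul_sigmoid_mul_one_sub_sigmoid (s : ℂ) :
    ∫ x : ℝ, exp (s * x) * ((sigmoid x * (1 - sigmoid x) : ℝ) : ℂ) =
      betaIntegral (1 + s) (1 - s) := by
  rw [betaIntegral, intervalIntegral.integral_of_le zero_le_one, integral_Ioc_eq_integral_Ioo,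
    integral_Ioo_zero_one_eq_integral_comp_sigmoid]
  congr with x
  rw [add_sub_cancel_left, sub_sub_cancel_left, sigmoid_cpow_mul_one_sub_sigmoid_cpow_neg,
    real_smul, mul_comm]

namespace Complex

theorem betaIntegral_eq_Gamma_mul_Gamma_of_add_eq_two {u v : ℂ} (hu : 0 < u.re)
    (hv : 0 < v.re) (huv : u + v = 2) : betaIntegral u v = Gamma u * Gamma v := by
  have h := Gamma_mul_Gamma_eq_betaIntegral hu hv
  rwa [huv, show Gamma 2 = 1 by simp [Gamma_ofNat_eq_factorial], one_mul, eq_comm] at h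

theorem Gamma_one_add_mul_Gamma_one_sub {s : ℂ} (hs : s ≠ 0) :
    Gamma (1 + s) * Gamma (1 - s) = π * s / sin (π * s) := by
  rw [add_comm, Gamma_add_one s hs, mul_assoc, Gamma_mul_Gamma_one_sub, mul_div_assoc']
  ring

theorem sin_pi_mul_I_mul (x : ℝ) : sin (π * (I * x)) = (Real.sinh (π * x) : ℂ) * I := by
  rw [show (π : ℂ) * (I * x) = ((π * x : ℝ) : ℂ) * I by push_cast; ring, sin_mul_I, ofReal_sinh]

end Complex

theorem logistic_char_function (t : ℝ) :
    (t ≠ 0 →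
      ∫ x : ℝ, Complex.exp (Complex.I * t * x) *
          ((Real.exp (-x) / (1 + Real.exp (-x))^2 : ℝ) : ℂ) =
        (Real.pi * t / Real.sinh (Real.pi * t) : ℝ)) ∧
    (t = 0 →
      ∫ x : ℝ, Complex.exp (Complex.I * t * x) *
          ((Real.exp (-x) / (1 + Real.exp (-x))^2 : ℝ) : ℂ) = 1) := by
  simp_rw [exp_neg_div_one_add_exp_neg_sq, integral_cexp_mul_sigmoid_mul_one_sub_sigmoid]
  rw [betaIntegral_eq_Gamma_mul_Gamma_of_add_eq_two (by simp) (by simp) (by ring)]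
  refine ⟨fun ht => ?_, fun ht => by simp [ht]⟩
  rw [Gamma_one_add_mul_Gamma_one_sub (mul_ne_zero I_ne_zero (ofReal_ne_zero.2 ht)),
    sin_pi_mul_I_mul]
  push_cast
  field_simp
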